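/- arXiv:2205.14385 — 2 statements merged into one kernel-verified Lean document; each statement's English description precedes it below -/
import Mathlib

section
/- Let X be a Banach space with dual tower (X_n) and let lim→ X_n be the direct limit with canonical maps α_n : X_n → lim→ X_n. Given a compatible family φ = (φ_n) ∈ ∏_n X_n* with φ_n = κ_{n,m}*(φ_m) for all n ≤ m and sup_n ‖φ_n‖ < ∞, the formula Φ([(x_n, n)]) := φ_n(x_n) gives a well-defined bounded linear functional on the dense subspace ⊔_n α_n(X_n) of lim→ X_n, with ‖Φ‖ ≤ sup_n ‖φ_n‖. -/
open NormedSpace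

/-- The adjoint of a continuous linear map: `adjL f φ = φ ∘ f`. -/
noncomputable def adjL {X Y : Type*} [NormedAddCommGroup X] [NormedSpace ℂ X]
    [NormedAddCommGroup Y] [NormedSpace ℂ Y] (f : X →L[ℂ] Y) :
    StrongDual ℂ Y →L[ℂ] StrongDual ℂ X :=
  (ContinuousLinearMap.compL ℂ X Y ℂ).flip f


/-- A bundled Banach space over `ℂ`. -/
structure Ban where
  X : Type
  [grp : NormedAddCommGroup X]
  [mod : NormedSpace ℂ X]
  [cpl : CompleteSpace X]

attribute [instance] Ban.grp Ban.mod Ban.cpl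

/-- The bidual of a bundled Banach space. -/
noncomputable def Ban.bidual (B : Ban) : Ban := ⟨StrongDual ℂ (StrongDual ℂ B.X)⟩

/-- The dual tower: `tower B 0 = B`, `tower B (n+1) = (tower B n)**`. -/
noncomputable def tower (B : Ban) : ℕ → Ban
  | 0 => B
  | n + 1 => (tower B n).bidual

/-- The composite canonical embedding `X_n → X_{n+k}`. -/
noncomputable def kappaAux (B : Ban) (n : ℕ) :
    (k : ℕ) → (tower B n).X →L[ℂ] (tower B (n + k)).X
  | 0 => ContinuousLinearMap.id ℂ _
  | k + 1 => (inclusionInDoubleDual ℂ (tower B (n + k)).X).comp (kappaAux B n k)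

/-- The connecting map `κ_{n,m} : X_n → X_m` of the dual tower, for `n ≤ m`. -/
noncomputable def kappa (B : Ban) (n m : ℕ) (h : n ≤ m) :
    (tower B n).X →L[ℂ] (tower B m).X := by
  rw [← Nat.add_sub_cancel' h]
  exact kappaAux B n (m - n)

/-- The iterated double adjoint `𝒥_n(f) : X_n → Y_n` along the dual towers. -/
noncomputable def Jmap {B C : Ban} (f : B.X →L[ℂ] C.X) :
    (n : ℕ) → (tower B n).X →L[ℂ] (tower C n).X
  | 0 => f
  | n + 1 => adjL (adjL (Jmap f n))

/-!
Since the `α_n` are isometric, hence injective, and compatible with the connecting maps, two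
representatives `α_n x_n = α_m x_m` become equal in a common later stage `X_k`, where the
compatibility of `φ` gives `φ_n x_n = φ_k(κ x_n) = φ_k(κ x_m) = φ_m x_m`. The ranges of the
`α_n` increase, so their union is already a subspace: every element of it is some `α_n x`, and
`|φ_n x| ≤ ‖φ_n‖ ‖x‖ = ‖φ_n‖ ‖α_n x‖`.
-/

section DirectedUnion

variable {ι : Type*} [Preorder ι] [IsDirected ι (· ≤ ·)] {E : ι → Type*} {L F : Type*}

theorem apply_eq_apply_of_compatible
    (κ : ∀ i j, i ≤ j → E i → E j) (α : ∀ i, E i → L) (φ : ∀ i, E i → F)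
    (hα : ∀ i, Function.Injective (α i)) (hακ : ∀ i j h x, α j (κ i j h x) = α i x)
    (hφκ : ∀ i j h x, φ j (κ i j h x) = φ i x) {i j : ι} {x : E i} {y : E j}
    (hxy : α i x = α j y) : φ i x = φ j y := by
  obtain ⟨k, hik, hjk⟩ := directed_of (· ≤ ·) i j
  have hκ : κ i k hik x = κ j k hjk y := hα k (by rw [hακ, hακ, hxy])
  rw [← hφκ i k hik, ← hφκ j k hjk, hκ]

variable [Nonempty ι]

section Module

variable {R : Type*} [Semiring R] [∀ i, AddCommMonoid (E i)] [∀ i, Module R (E i)]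
  [AddCommMonoid L] [Module R L] [AddCommMonoid F] [Module R F]

theorem exists_apply_eq_of_mem_span_iUnion_range (α : ∀ i, E i →ₗ[R] L)
    (hmono : Monotone fun i => Set.range (α i)) {y : L}
    (hy : y ∈ Submodule.span R (⋃ i, Set.range (α i))) : ∃ i x, α i x = y := by
  have hdir : Directed (· ≤ ·) fun i => LinearMap.range (α i) :=
    (show Monotone fun i => LinearMap.range (α i) from fun i j h => by
      simpa only [← LinearMap.coe_range, SetLike.coe_subset_coe] using hmono h).directed_le
  simp only [← LinearMap.coe_range, ← Submodule.coe_iSup_of_directed _ hdir,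
    Submodule.span_eq] at hy
  obtain ⟨i, x, rfl⟩ := (Submodule.mem_iSup_of_directed _ hdir).1 hy
  exact ⟨i, x, rfl⟩

theorem exists_linearMap_span_iUnion_range (α : ∀ i, E i →ₗ[R] L) (φ : ∀ i, E i →ₗ[R] F)
    (hmono : Monotone fun i => Set.range (α i))
    (hwd : ∀ i j x y, α i x = α j y → φ i x = φ j y) :
    ∃ Φ : Submodule.span R (⋃ i, Set.range (α i)) →ₗ[R] F, ∀ i x,
      Φ ⟨α i x, Submodule.subset_span (Set.mem_iUnion.2 ⟨i, x, rfl⟩)⟩ = φ i x := by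
  set S := Submodule.span R (⋃ i, Set.range (α i))
  choose idx pt hpt using fun y : S =>
    exists_apply_eq_of_mem_span_iUnion_range α hmono y.2
  have hΦ : ∀ (y : S) i x, α i x = (y : L) → φ (idx y) (pt y) = φ i x := fun y i x hx =>
    hwd _ _ _ _ (by rw [hpt, hx])
  have hcommon : ∀ y z : S, ∃ k x w, α k x = (y : L) ∧ α k w = (z : L) := fun y z => by
    obtain ⟨k, hk, hk'⟩ := directed_of (· ≤ ·) (idx y) (idx z)
    obtain ⟨x, hx⟩ := hmono hk ⟨pt y, rfl⟩
    obtain ⟨w, hw⟩ := hmono hk' ⟨pt z, rfl⟩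
    exact ⟨k, x, w, by rw [hx, hpt], by rw [hw, hpt]⟩
  refine ⟨{ toFun := fun y => φ (idx y) (pt y), map_add' := ?_, map_smul' := ?_ }, ?_⟩
  · intro y z
    obtain ⟨k, x, w, hx, hw⟩ := hcommon y z
    rw [hΦ y k x hx, hΦ z k w hw, hΦ (y + z) k (x + w) (by simp [hx, hw]), map_add]
  · intro c y
    rw [hΦ (c • y) (idx y) (c • pt y) (by simp [hpt]), map_smul, RingHom.id_apply]
  · exact fun i x => hΦ _ i x rfl

end Module

theorem exists_continuousLinearMap_span_iUnion_range_norm_le {𝕜 : Type*}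
    [NontriviallyNormedField 𝕜] [∀ i, SeminormedAddCommGroup (E i)] [∀ i, NormedSpace 𝕜 (E i)]
    [SeminormedAddCommGroup L] [NormedSpace 𝕜 L] [SeminormedAddCommGroup F] [NormedSpace 𝕜 F]
    (α : ∀ i, E i →L[𝕜] L) (φ : ∀ i, E i →L[𝕜] F) (hα : ∀ i x, ‖α i x‖ = ‖x‖)
    (hmono : Monotone fun i => Set.range (α i))
    (hwd : ∀ i j x y, α i x = α j y → φ i x = φ j y) {C : ℝ} (hC : ∀ i, ‖φ i‖ ≤ C) :
    ∃ Φ : Submodule.span 𝕜 (⋃ i, Set.range (α i)) →L[𝕜] F,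
      (∀ i x, Φ ⟨α i x, Submodule.subset_span (Set.mem_iUnion.2 ⟨i, x, rfl⟩)⟩ = φ i x) ∧
        ‖Φ‖ ≤ C := by
  obtain ⟨Φ, hΦ⟩ := exists_linearMap_span_iUnion_range (fun i => (α i).toLinearMap)
    (fun i => (φ i).toLinearMap) hmono hwd
  simp only [ContinuousLinearMap.coe_coe] at hΦ
  have hbound : ∀ y, ‖Φ y‖ ≤ C * ‖y‖ := fun y => by
    obtain ⟨i, x, hx⟩ : ∃ i x, α i x = (y : L) := exists_apply_eq_of_mem_span_iUnion_range
      (fun i => (α i).toLinearMap) hmono y.2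
    calc ‖Φ y‖ = ‖φ i x‖ := by rw [← hΦ]; congr; exact Subtype.ext hx.symm
      _ ≤ ‖φ i‖ * ‖x‖ := (φ i).le_opNorm x
      _ ≤ C * ‖y‖ := by rw [← hα, hx, Submodule.coe_norm]; gcongr; exact hC i
  have hC0 : 0 ≤ C := (norm_nonneg _).trans (hC (Classical.arbitrary ι))
  exact ⟨Φ.mkContinuous C hbound, hΦ, Φ.mkContinuous_norm_le hC0 hbound⟩

end DirectedUnion

theorem stmt11_general (B : Ban) {L : Type} [NormedAddCommGroup L] [NormedSpace ℂ L]
    (α : ∀ n, (tower B n).X →L[ℂ] L)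
    (hiso : ∀ n x, ‖α n x‖ = ‖x‖)
    (hcompat : ∀ n m (h : n ≤ m), (α m).comp (kappa B n m h) = α n)
    (φ : ∀ n, StrongDual ℂ (tower B n).X)
    (hφ : ∀ n m (h : n ≤ m), φ n = adjL (kappa B n m h) (φ m))
    (hbdd : BddAbove (Set.range fun n => ‖φ n‖)) :
    -- the formula is well defined:
    (∀ n m (xn : (tower B n).X) (xm : (tower B m).X),
        α n xn = α m xm → φ n xn = φ m xm) ∧
    -- and gives a bounded linear functional on the subspace spanned by `⋃_n α_n(X_n)`,
    -- of norm at most `sup_n ‖φ_n‖`: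
    ∃ Φ : ↥(Submodule.span ℂ (⋃ n, Set.range fun x => α n x)) →L[ℂ] ℂ,
      (∀ n (x : (tower B n).X),
        Φ ⟨α n x, Submodule.subset_span
            (Set.mem_iUnion.mpr ⟨n, Set.mem_range_self x⟩)⟩ = φ n x) ∧
      ‖Φ‖ ≤ ⨆ n, ‖φ n‖ := by
  have hακ : ∀ n m h x, α m (kappa B n m h x) = α n x := fun n m h =>
    DFunLike.congr_fun (hcompat n m h)
  have hφκ : ∀ n m h x, φ m (kappa B n m h x) = φ n x := fun n m h x =>
    (DFunLike.congr_fun (hφ n m h) x).symm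
  have hwd : ∀ n m xn xm, α n xn = α m xm → φ n xn = φ m xm := fun _ _ _ _ =>
    apply_eq_apply_of_compatible (fun n m h => kappa B n m h) (fun n => α n)
      (fun n => φ n) (fun n => (AddMonoidHomClass.isometry_of_norm _ (hiso n)).injective) hακ hφκ
  have hmono : Monotone fun n => Set.range (α n) := fun n m h => by
    rintro _ ⟨x, rfl⟩
    exact ⟨kappa B n m h x, hακ n m h x⟩
  exact ⟨hwd, exists_continuousLinearMap_span_iUnion_range_norm_le α φ hiso hmono hwd
    fun n => le_ciSup hbdd n⟩

/-- given a compatible family `φ = (φ_n) ∈ ∏ X_n*` with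
`φ_n = κ_{n,m}*(φ_m)` and `sup_n ‖φ_n‖ < ∞`, the formula `Φ(α_n(x)) := φ_n(x)` is
well defined and extends to a bounded linear functional on the dense subspace
`⋃_n α_n(X_n)` of the direct limit, of norm at most `sup_n ‖φ_n‖`. Here the direct
limit is realized as a Banach space `L` with compatible isometric embeddings `α_n`
whose ranges have dense union. -/
theorem stmt11 (B : Ban) {L : Type} [NormedAddCommGroup L] [NormedSpace ℂ L]
    [CompleteSpace L]
    (α : ∀ n, (tower B n).X →L[ℂ] L)
    (hiso : ∀ n x, ‖α n x‖ = ‖x‖)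
    (hcompat : ∀ n m (h : n ≤ m), (α m).comp (kappa B n m h) = α n)
    (hdense : Dense (⋃ n, Set.range fun x => α n x))
    (φ : ∀ n, StrongDual ℂ (tower B n).X)
    (hφ : ∀ n m (h : n ≤ m), φ n = adjL (kappa B n m h) (φ m))
    (hbdd : BddAbove (Set.range fun n => ‖φ n‖)) :
    -- the formula is well defined:
    (∀ n m (xn : (tower B n).X) (xm : (tower B m).X),
        α n xn = α m xm → φ n xn = φ m xm) ∧
    -- and gives a bounded linear functional on the subspace spanned by `⋃_n α_n(X_n)`,
    -- of norm at most `sup_n ‖φ_n‖`: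
    ∃ Φ : ↥(Submodule.span ℂ (⋃ n, Set.range fun x => α n x)) →L[ℂ] ℂ,
      (∀ n (x : (tower B n).X),
        Φ ⟨α n x, Submodule.subset_span
            (Set.mem_iUnion.mpr ⟨n, Set.mem_range_self x⟩)⟩ = φ n x) ∧
      ‖Φ‖ ≤ ⨆ n, ‖φ n‖ :=
  stmt11_general B α hiso hcompat φ hφ hbdd
end

section
/- Let A be a uniform algebra on a compact Hausdorff space K (a closed point-separating unital subalgebra of C(K)), and suppose every element of a dense subset D of A has a square root in A. Then for any two characters φ, ψ ∈ Sp(A) with φ ≠ ψ, one has ‖φ − ψ‖ = 2; that is, every Gleason part of A is a single point. -/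
/-!
Let `M` be a constant with `‖φ f‖ ≤ M * ‖f‖` on the kernel of `ψ`. If `f ≈ g * g` then
`g - ψ g` lies in that kernel, has norm about `‖f‖ ^ (1/2)`, and `‖φ g - ψ g‖` is about
`‖φ f‖ ^ (1/2)`, so `M ^ 2` is again such a constant. Iterating, `M < 1` would force `φ = 0` on
the kernel of `ψ`, i.e. `φ = ψ`. Hence the unit ball of the kernel of `ψ` contains `f` with
`φ f` real and close to `1`. For `c = 1 - s` the Möbius image `(f - c) / (1 - c f)` is again in the
unit ball: the sup norm is computed by point evaluations, which are characters as well. On it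
`φ` is close to `1` and `ψ` equals `-c`, so `‖φ - ψ‖ ≥ 2 - 3 s`.
-/

open Filter Topology

theorem AlgHom.exists_apply_eq_zero_apply_ne_zero {R B : Type*} [CommRing R] [Ring B]
    [Algebra R B] {φ ψ : B →ₐ[R] R} (h : φ ≠ ψ) :
    ∃ f : B, ψ f = 0 ∧ φ f ≠ 0 := by
  obtain ⟨x, hx⟩ := DFunLike.ne_iff.mp h
  refine ⟨x - algebraMap R B (ψ x), by simp, ?_⟩
  simpa [sub_eq_zero] using hx

theorem Complex.norm_sub_ofReal_le_norm_one_sub_mul {z : ℂ} (hz : ‖z‖ ≤ 1) {c : ℝ}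
    (hc : |c| ≤ 1) : ‖z - c‖ ≤ ‖1 - c * z‖ := by
  have key : ‖1 - c * z‖ ^ 2 - ‖z - c‖ ^ 2 = (1 - c ^ 2) * (1 - ‖z‖ ^ 2) := by
    simp only [Complex.sq_norm, Complex.normSq_apply, Complex.sub_re, Complex.one_re,
      Complex.mul_re, Complex.ofReal_re, Complex.ofReal_im, Complex.sub_im, Complex.one_im,
      Complex.mul_im]
    ring
  have hc2 : c ^ 2 ≤ 1 := by nlinarith [sq_abs c, abs_nonneg c]
  have hz2 : ‖z‖ ^ 2 ≤ 1 := by nlinarith [norm_nonneg z]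
  refine (pow_le_pow_iff_left₀ (norm_nonneg _) (norm_nonneg _) two_ne_zero).mp ?_
  nlinarith [mul_nonneg (sub_nonneg.mpr hc2) (sub_nonneg.mpr hz2)]

theorem two_sub_three_mul_le_mobius {s t : ℝ} (hs0 : 0 < s) (hs1 : s ≤ 1)
    (ht : 1 - s ^ 2 ≤ t) (ht1 : t ≤ 1) :
    2 - 3 * s ≤ (t - (1 - s)) / (1 - (1 - s) * t) + (1 - s) := by
  have hden : 0 < 1 - (1 - s) * t := by nlinarith
  have : 1 - 2 * s ≤ (t - (1 - s)) / (1 - (1 - s) * t) := by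
    rw [le_div_iff₀ hden]
    nlinarith [mul_nonneg (mul_nonneg hs0.le (sub_nonneg.mpr ht1))
      (by linarith : (0 : ℝ) ≤ 3 - 2 * s)]
  linarith

variable {K : Type*} [TopologicalSpace K] [CompactSpace K] {A : Subalgebra ℂ C(K, ℂ)}

theorem ContinuousMap.norm_le_sqrt_norm_mul_self (g : C(K, ℂ)) : ‖g‖ ≤ √‖g * g‖ :=
  (ContinuousMap.norm_le _ (Real.sqrt_nonneg _)).2 fun x =>
    (Real.le_sqrt (norm_nonneg _) (norm_nonneg _)).2 <| by
      simpa [sq] using (g * g).norm_coe_le_norm x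

theorem Subalgebra.norm_one_le : ‖(1 : A)‖ ≤ 1 :=
  (ContinuousMap.norm_le _ zero_le_one).2 fun x => by simp

theorem Subalgebra.norm_apply_le [CompleteSpace A] (χ : A →ₐ[ℂ] ℂ) (f : A) : ‖χ f‖ ≤ ‖f‖ :=
  (AlgHom.norm_apply_le_self_mul_norm_one χ f).trans
    (mul_le_of_le_one_right (norm_nonneg _) Subalgebra.norm_one_le)

theorem Subalgebra.exists_forall_map_eq_mobius [CompleteSpace A] {f : A} (hf : ‖f‖ ≤ 1)
    {c : ℝ} (hc : |c| < 1) :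
    ∃ h : A, ‖h‖ ≤ 1 ∧ ∀ χ : A →ₐ[ℂ] ℂ, χ h = (χ f - c) / (1 - c * χ f) := by
  have hcf : ‖(c : ℂ) • f‖ < 1 := by
    rw [norm_smul, Complex.norm_real, Real.norm_eq_abs]
    nlinarith [abs_nonneg c, norm_nonneg f]
  let u := Units.oneSub _ hcf
  have hχ : ∀ χ : A →ₐ[ℂ] ℂ, χ ((f - (c : ℂ) • 1) * ↑u⁻¹) = (χ f - c) / (1 - c * χ f) := by
    intro χ
    rw [map_mul, map_units_inv, Units.val_oneSub, map_sub, map_sub, map_one, map_smul, map_smul,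
      map_one, smul_eq_mul, smul_eq_mul, mul_one, div_eq_mul_inv]
  refine ⟨_, (ContinuousMap.norm_le _ zero_le_one).2 fun x => ?_, hχ⟩
  have hx := hχ ((ContinuousMap.evalAlgHom ℂ ℂ x).comp A.val)
  refine (congrArg norm hx).trans_le ?_
  rw [norm_div]
  exact div_le_one_of_le₀ (Complex.norm_sub_ofReal_le_norm_one_sub_mul
    (((f : C(K, ℂ)).norm_coe_le_norm x).trans hf) hc.le) (norm_nonneg _)

theorem Subalgebra.exists_approx_sqrt_of_denseRange_mul_self [CompleteSpace A]
    (hsq : DenseRange fun g : A => g * g) (φ ψ : A →ₐ[ℂ] ℂ) {f : A} (hf : ψ f = 0)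
    {δ : ℝ} (hδ : 0 < δ) :
    ∃ h : A, ψ h = 0 ∧ ‖h‖ ≤ √(‖f‖ + δ) + √δ ∧ √(‖φ f‖ - δ) - √δ ≤ ‖φ h‖ := by
  obtain ⟨g, hg⟩ := hsq.exists_dist_lt f hδ
  rw [dist_comm, dist_eq_norm] at hg
  have hgf : ‖g‖ ≤ √(‖f‖ + δ) := by
    refine (ContinuousMap.norm_le_sqrt_norm_mul_self (g : C(K, ℂ))).trans
      (Real.sqrt_le_sqrt ?_)
    have := norm_le_insert' (g * g) f
    change ‖g * g‖ ≤ ‖f‖ + δ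
    linarith
  have hχ : ∀ χ : A →ₐ[ℂ] ℂ, ‖χ g‖ ^ 2 = ‖χ f + χ (g * g - f)‖ := fun χ => by
    rw [← map_add, add_sub_cancel, map_mul, norm_mul, sq]
  have hψg : ‖ψ g‖ ≤ √δ := by
    refine (Real.le_sqrt (norm_nonneg _) hδ.le).2 ?_
    rw [hχ, hf, zero_add]
    exact (Subalgebra.norm_apply_le ψ _).trans hg.le
  have hφg : √(‖φ f‖ - δ) ≤ ‖φ g‖ := by
    refine Real.sqrt_le_left (norm_nonneg _) |>.2 ?_
    rw [hχ]
    have := (Subalgebra.norm_apply_le φ (g * g - f)).trans hg.le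
    have := norm_sub_norm_le (φ f) (-φ (g * g - f))
    rw [sub_neg_eq_add, norm_neg] at this
    linarith
  refine ⟨g - ψ g • 1, by simp, ?_, ?_⟩
  · calc ‖g - ψ g • 1‖ ≤ ‖g‖ + ‖ψ g‖ * ‖(1 : A)‖ := (norm_sub_le _ _).trans_eq (by rw [norm_smul])
      _ ≤ √(‖f‖ + δ) + √δ := by
        gcongr
        exact mul_le_of_le_one_right (norm_nonneg _) Subalgebra.norm_one_le |>.trans hψg
  · calc √(‖φ f‖ - δ) - √δ ≤ ‖φ g‖ - ‖ψ g‖ := by linarith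
      _ ≤ ‖φ (g - ψ g • 1)‖ := by simpa using norm_sub_norm_le (φ g) (ψ g)

theorem Subalgebra.norm_apply_le_sq_mul_of_denseRange [CompleteSpace A]
    (hsq : DenseRange fun g : A => g * g) {φ ψ : A →ₐ[ℂ] ℂ} {M : ℝ} (hM0 : 0 ≤ M)
    (hM : ∀ h : A, ψ h = 0 → ‖φ h‖ ≤ M * ‖h‖) {f : A} (hf : ψ f = 0) :
    ‖φ f‖ ≤ M ^ 2 * ‖f‖ := by
  have key : ∀ δ > 0, √(‖φ f‖ - δ) - √δ ≤ M * (√(‖f‖ + δ) + √δ) := fun δ hδ => by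
    obtain ⟨h, hψh, hh, hφh⟩ := exists_approx_sqrt_of_denseRange_mul_self hsq φ ψ hf hδ
    exact hφh.trans <| (hM h hψh).trans (by gcongr)
  have hsqrt : √‖φ f‖ ≤ M * √‖f‖ := by
    have hl : Continuous fun δ : ℝ => √(‖φ f‖ - δ) - √δ := by fun_prop
    have hr : Continuous fun δ : ℝ => M * (√(‖f‖ + δ) + √δ) := by fun_prop
    have := le_of_tendsto_of_tendsto (hl.continuousWithinAt (s := Set.Ioi 0) (x := 0))
      (hr.continuousWithinAt (s := Set.Ioi 0) (x := 0)) (eventually_nhdsWithin_of_forall key)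
    simpa only [sub_zero, add_zero, Real.sqrt_zero] using this
  calc ‖φ f‖ = √‖φ f‖ ^ 2 := (Real.sq_sqrt (norm_nonneg _)).symm
    _ ≤ (M * √‖f‖) ^ 2 := by gcongr
    _ = M ^ 2 * ‖f‖ := by rw [mul_pow, Real.sq_sqrt (norm_nonneg _)]

theorem Subalgebra.norm_apply_le_pow_two_pow_mul_of_denseRange [CompleteSpace A]
    (hsq : DenseRange fun g : A => g * g) {φ ψ : A →ₐ[ℂ] ℂ} {M : ℝ} (hM0 : 0 ≤ M)
    (hM : ∀ h : A, ψ h = 0 → ‖φ h‖ ≤ M * ‖h‖) (n : ℕ) {f : A} (hf : ψ f = 0) :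
    ‖φ f‖ ≤ M ^ 2 ^ n * ‖f‖ := by
  induction n generalizing f with
  | zero => rw [pow_zero, pow_one]; exact hM f hf
  | succ n ih =>
    rw [pow_succ, pow_mul]
    exact norm_apply_le_sq_mul_of_denseRange hsq (by positivity) (fun h hh => ih hh) hf

theorem Subalgebra.exists_lt_norm_apply_of_denseRange [CompleteSpace A]
    (hsq : DenseRange fun g : A => g * g) {φ ψ : A →ₐ[ℂ] ℂ} (hφψ : φ ≠ ψ) {r : ℝ} (hr : r < 1) :
    ∃ f : A, ψ f = 0 ∧ r * ‖f‖ < ‖φ f‖ := by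
  by_contra! hbound
  obtain ⟨f₀, hψf₀, hφf₀⟩ := AlgHom.exists_apply_eq_zero_apply_ne_zero hφψ
  have hpos : 0 < ‖φ f₀‖ := norm_pos_iff.mpr hφf₀
  have hr0 : 0 ≤ r := by
    by_contra! hr0
    nlinarith [hbound f₀ hψf₀, norm_nonneg f₀]
  have hlim : Tendsto (fun n : ℕ => r ^ 2 ^ n * ‖f₀‖) atTop (𝓝 0) := by
    have := ((tendsto_pow_atTop_nhds_zero_of_lt_one hr0 hr).comp
      (tendsto_pow_atTop_atTop_of_one_lt one_lt_two)).mul_const ‖f₀‖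
    rwa [zero_mul] at this
  exact hpos.not_ge <| ge_of_tendsto' hlim fun n =>
    norm_apply_le_pow_two_pow_mul_of_denseRange hsq hr0 hbound n hψf₀

theorem Subalgebra.exists_norm_le_one_apply_eq_ofReal_gt [CompleteSpace A]
    (hsq : DenseRange fun g : A => g * g) {φ ψ : A →ₐ[ℂ] ℂ} (hφψ : φ ≠ ψ) {r : ℝ}
    (hr0 : 0 ≤ r) (hr : r < 1) :
    ∃ f : A, ‖f‖ ≤ 1 ∧ ψ f = 0 ∧ ∃ t : ℝ, r < t ∧ φ f = t := by
  obtain ⟨f, hψf, hlt⟩ := exists_lt_norm_apply_of_denseRange hsq hφψ hr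
  have hf : 0 < ‖f‖ := by
    refine norm_pos_iff.mpr fun h0 => ?_
    rw [h0, map_zero, norm_zero, norm_zero, mul_zero] at hlt
    exact hlt.false
  have hφf : φ f ≠ 0 := norm_pos_iff.mp ((mul_nonneg hr0 hf.le).trans_lt hlt)
  set t : ℝ := ‖φ f‖ / ‖f‖
  have ht : 0 ≤ t := by positivity
  refine ⟨((t : ℂ) / φ f) • f, ?_, by rw [map_smul, hψf, smul_zero], t, (lt_div_iff₀ hf).2 hlt, ?_⟩
  · rw [norm_smul, norm_div, Complex.norm_real, Real.norm_of_nonneg ht, div_mul_eq_mul_div,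
      div_mul_cancel₀ _ hf.ne', div_self (norm_ne_zero_iff.mpr hφf)]
  · rw [map_smul, smul_eq_mul, div_mul_cancel₀ _ hφf]

theorem Subalgebra.exists_norm_le_one_two_sub_three_mul_le [CompleteSpace A]
    (hsq : DenseRange fun g : A => g * g) {φ ψ : A →ₐ[ℂ] ℂ} (hφψ : φ ≠ ψ) {s : ℝ}
    (hs0 : 0 < s) (hs1 : s ≤ 1) :
    ∃ h : A, ‖h‖ ≤ 1 ∧ 2 - 3 * s ≤ ‖φ h - ψ h‖ := by
  obtain ⟨f, hf, hψf, t, ht, hφf⟩ :=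
    exists_norm_le_one_apply_eq_ofReal_gt hsq hφψ (r := 1 - s ^ 2) (by nlinarith) (by nlinarith)
  have ht1 : t ≤ 1 := by
    have := (norm_apply_le φ f).trans hf
    rw [hφf, Complex.norm_real, Real.norm_eq_abs] at this
    exact (le_abs_self t).trans this
  obtain ⟨h, hh, hχ⟩ := exists_forall_map_eq_mobius hf (c := 1 - s)
    (abs_lt.2 ⟨by linarith, by linarith⟩)
  refine ⟨h, hh, ?_⟩
  have hval : φ h - ψ h = ((t - (1 - s)) / (1 - (1 - s) * t) + (1 - s) : ℝ) := by
    rw [hχ, hχ, hφf, hψf]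
    push_cast
    ring
  rw [hval, Complex.norm_real, Real.norm_eq_abs]
  exact (two_sub_three_mul_le_mobius hs0 hs1 ht.le ht1).trans (le_abs_self _)

theorem stmt16_general {K : Type} [TopologicalSpace K] [CompactSpace K]
    (A : Subalgebra ℂ C(K, ℂ)) (hclosed : IsClosed (A : Set C(K, ℂ)))
    (D : Set C(K, ℂ))
    (hdense : (A : Set C(K, ℂ)) ⊆ closure D)
    (hroot : ∀ f ∈ D, ∃ g ∈ A, f = g * g)
    (φ ψ : ↥A →L[ℂ] ℂ)
    (hφm : ∀ f g : ↥A, φ (f * g) = φ f * φ g) (hφ1 : φ 1 = 1)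
    (hψm : ∀ f g : ↥A, ψ (f * g) = ψ f * ψ g) (hψ1 : ψ 1 = 1)
    (hne : φ ≠ ψ) :
    ‖φ - ψ‖ = 2 := by
  have := hclosed.completeSpace_coe
  have hsq : DenseRange fun g : A => g * g := by
    refine Topology.IsInducing.subtypeVal.dense_iff.2 fun f => closure_mono ?_ (hdense f.2)
    intro d hd
    obtain ⟨g, hg, rfl⟩ := hroot d hd
    exact ⟨⟨g, hg⟩ * ⟨g, hg⟩, ⟨⟨g, hg⟩, rfl⟩, rfl⟩
  let φ' : A →ₐ[ℂ] ℂ := .ofLinearMap φ hφ1 hφm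
  let ψ' : A →ₐ[ℂ] ℂ := .ofLinearMap ψ hψ1 hψm
  have hne' : φ' ≠ ψ' := fun h => hne (ContinuousLinearMap.ext fun f => DFunLike.congr_fun h f)
  have hφ : ‖φ‖ ≤ 1 := φ.opNorm_le_bound zero_le_one fun f => by
    rw [one_mul]; exact Subalgebra.norm_apply_le φ' f
  have hψ : ‖ψ‖ ≤ 1 := ψ.opNorm_le_bound zero_le_one fun f => by
    rw [one_mul]; exact Subalgebra.norm_apply_le ψ' f
  refine le_antisymm ((norm_sub_le φ ψ).trans (by linarith)) ?_
  have hlim : Tendsto (fun s : ℝ => 2 - 3 * s) (𝓝[>] 0) (𝓝 2) := by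
    have : Continuous fun s : ℝ => 2 - 3 * s := by fun_prop
    exact (this.tendsto' 0 2 (by norm_num)).mono_left nhdsWithin_le_nhds
  refine le_of_tendsto hlim ?_
  filter_upwards [Ioc_mem_nhdsGT one_pos] with s hs
  obtain ⟨h, hh, hsub⟩ := Subalgebra.exists_norm_le_one_two_sub_three_mul_le hsq hne' hs.1 hs.2
  exact hsub.trans ((φ - ψ).unit_le_opNorm h hh)

/-- let `A` be a uniform algebra on a compact Hausdorff space `K` (a
closed, point-separating, unital subalgebra of `C(K)`). If every element of a dense
subset `D` of `A` has a square root in `A`, then any two distinct characters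
`φ, ψ ∈ Sp(A)` satisfy `‖φ - ψ‖ = 2`; i.e. every Gleason part is a single point. -/
theorem stmt16 {K : Type} [TopologicalSpace K] [CompactSpace K] [T2Space K]
    (A : Subalgebra ℂ C(K, ℂ)) (hclosed : IsClosed (A : Set C(K, ℂ)))
    (hsep : ∀ x y : K, x ≠ y → ∃ f ∈ A, f x ≠ f y)
    (D : Set C(K, ℂ)) (hDA : D ⊆ (A : Set C(K, ℂ)))
    (hdense : (A : Set C(K, ℂ)) ⊆ closure D)
    (hroot : ∀ f ∈ D, ∃ g ∈ A, f = g * g)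
    (φ ψ : ↥A →L[ℂ] ℂ)
    (hφm : ∀ f g : ↥A, φ (f * g) = φ f * φ g) (hφ1 : φ 1 = 1)
    (hψm : ∀ f g : ↥A, ψ (f * g) = ψ f * ψ g) (hψ1 : ψ 1 = 1)
    (hne : φ ≠ ψ) :
    ‖φ - ψ‖ = 2 :=
  stmt16_general A hclosed D hdense hroot φ ψ hφm hφ1 hψm hψ1 hne
end
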